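/- arXiv:1611.07468 — 2 statements merged into one kernel-verified Lean document; each statement's English description precedes it below -/
import Mathlib

section
/- Let G and H be connected graphs, with |V(G)|≥2. Then F(G+_R H) = 8|V(H)|F(G) + |V(G)|F(H) + 24|E(H)|M₁(G) + 12|E(G)|M₁(H) + 8|V(H)||E(G)|, where G+_R H is the R-sum of G and H. -/
open SimpleGraph Finset
open scoped Classical

noncomputable section

/-- The generalized hierarchical product `G(U)ΠH`. -/
def hierProd {α β : Type*} (G : SimpleGraph α) (H : SimpleGraph β) (U : Set α) :
    SimpleGraph (α × β) where
  Adj p q := (p.1 = q.1 ∧ p.1 ∈ U ∧ H.Adj p.2 q.2) ∨ (p.2 = q.2 ∧ G.Adj p.1 q.1)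
  symm := by
    constructor
    rintro p q (⟨h1, h2, h3⟩ | ⟨h1, h2⟩)
    · exact Or.inl ⟨h1.symm, h1 ▸ h2, h3.symm⟩
    · exact Or.inr ⟨h1.symm, h2.symm⟩
  loopless := by
    constructor
    rintro p (⟨_, _, h⟩ | ⟨_, h⟩)
    · exact H.loopless.irrefl _ h
    · exact G.loopless.irrefl _ h

/-- The F-index (forgotten topological index): sum of cubes of degrees. -/
def Findex {α : Type*} [Fintype α] (G : SimpleGraph α) : ℕ :=
  ∑ v, G.degree v ^ 3

/-- The first Zagreb index: sum of squares of degrees. -/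
def M1 {α : Type*} [Fintype α] (G : SimpleGraph α) : ℕ :=
  ∑ v, G.degree v ^ 2

/-- The general first Zagreb index with exponent `n`. -/
def xiIndex {α : Type*} [Fintype α] (G : SimpleGraph α) (n : ℕ) : ℕ :=
  ∑ v, G.degree v ^ n

/-- The redefined Zagreb index `ReZG(G) = Σ_{uv∈E} d(u)d(v)(d(u)+d(v))`. -/
def ReZG {α : Type*} [Fintype α] (G : SimpleGraph α) : ℕ :=
  ∑ e ∈ G.edgeFinset,
    Sym2.lift ⟨fun u v => G.degree u * G.degree v * (G.degree u + G.degree v),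
      fun u v => by ring⟩ e

/-- The subdivision graph `S(G)`: each edge replaced by a path of length two. -/
def Sgraph {α : Type*} (G : SimpleGraph α) : SimpleGraph (α ⊕ ↥G.edgeSet) where
  Adj x y :=
    match x, y with
    | Sum.inl u, Sum.inr e => u ∈ (e : Sym2 α)
    | Sum.inr e, Sum.inl u => u ∈ (e : Sym2 α)
    | _, _ => False
  symm := by constructor; rintro (u | e) (v | f) h <;> simp_all
  loopless := by constructor; rintro (u | e) h <;> simp_all

/-- The graph on `V(G) ⊕ E(G)` whose only edges are the original edges of `G`. -/
def Ograph {α : Type*} (G : SimpleGraph α) : SimpleGraph (α ⊕ ↥G.edgeSet) where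
  Adj x y :=
    match x, y with
    | Sum.inl u, Sum.inl v => G.Adj u v
    | _, _ => False
  symm := by constructor; rintro (u | e) (v | f) h <;> simp_all <;> exact h.symm
  loopless := by constructor; rintro (u | e) h <;> simp_all

/-- The graph on `V(G) ⊕ E(G)` whose edges join pairs of adjacent edges of `G`
(line-graph adjacency). -/
def Lgraph {α : Type*} (G : SimpleGraph α) : SimpleGraph (α ⊕ ↥G.edgeSet) where
  Adj x y :=
    match x, y with
    | Sum.inr e, Sum.inr f => e ≠ f ∧ ∃ u, u ∈ (e : Sym2 α) ∧ u ∈ (f : Sym2 α)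
    | _, _ => False
  symm := by
    constructor
    rintro (u | e) (v | f) h <;> simp_all
    exact ⟨Ne.symm h.1, h.2.imp fun u hu => hu.symm⟩
  loopless := by constructor; rintro (u | e) h <;> simp_all

/-- The triangle parallel graph `R(G)`. -/
def Rgraph {α : Type*} (G : SimpleGraph α) : SimpleGraph (α ⊕ ↥G.edgeSet) :=
  Sgraph G ⊔ Ograph G

/-- The line superposition graph `Q(G)`. -/
def Qgraph {α : Type*} (G : SimpleGraph α) : SimpleGraph (α ⊕ ↥G.edgeSet) :=
  Sgraph G ⊔ Lgraph G

/-- The total graph `T(G)`. -/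
def Tgraph {α : Type*} (G : SimpleGraph α) : SimpleGraph (α ⊕ ↥G.edgeSet) :=
  Sgraph G ⊔ Ograph G ⊔ Lgraph G

/-- The F-sum `G +_F H`, where `K` is one of `S(G), R(G), Q(G), T(G)`:
the generalized hierarchical product `K(V(G))ΠH`. -/
def FSum {α β : Type*} {G : SimpleGraph α} (K : SimpleGraph (α ⊕ ↥G.edgeSet))
    (H : SimpleGraph β) : SimpleGraph ((α ⊕ ↥G.edgeSet) × β) :=
  hierProd K H (Set.range Sum.inl)

end

/-! In `G +_R H` a vertex `(u, w)` with `u ∈ V(G)` has degree `d_H(w) + 2 d_G(u)`, because `u`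
has `d_G(u)` neighbours in `V(G)` and `d_G(u)` in `E(G)` inside `R(G)`; a vertex `(e, w)` with
`e ∈ E(G)` has degree `2`. Expanding the cube of the first kind of degree and using
`∑ d = 2|E|` in `G` and `H` gives the formula. -/

theorem sum_sum_add_pow_three {ι κ R : Type*} [Fintype ι] [Fintype κ] [CommSemiring R]
    (f : κ → R) (g : ι → R) :
    ∑ i, ∑ k, (f k + g i) ^ 3 =
      Fintype.card ι * ∑ k, f k ^ 3 + 3 * (∑ i, g i) * ∑ k, f k ^ 2
        + 3 * (∑ i, g i ^ 2) * ∑ k, f k + Fintype.card κ * ∑ i, g i ^ 3 := by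
  have hcube (a b : R) : (a + b) ^ 3 = a ^ 3 + 3 * b * a ^ 2 + 3 * b ^ 2 * a + b ^ 3 := by ring
  simp only [hcube, sum_add_distrib, ← mul_sum, ← sum_mul, sum_const, card_univ, nsmul_eq_mul]

namespace SimpleGraph

variable {α β : Type*} [Fintype α] [Fintype β]

theorem degree_eq_sum_ite (G : SimpleGraph α) (v : α) :
    G.degree v = ∑ q, if G.Adj v q then 1 else 0 := by
  rw [← card_neighborFinset_eq_degree, neighborFinset_eq_filter, card_filter]

theorem hierProd_degree (K : SimpleGraph α) (H : SimpleGraph β) (U : Set α)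
    [DecidablePred (· ∈ U)] (x : α) (w : β) :
    (hierProd K H U).degree (x, w) = (if x ∈ U then H.degree w else 0) + K.degree x := by
  have hsplit (y : α) (z : β) : (if (hierProd K H U).Adj (x, w) (y, z) then 1 else 0) =
      (if x = y ∧ x ∈ U ∧ H.Adj w z then 1 else 0) + (if w = z ∧ K.Adj x y then 1 else 0) := by
    have hdisj : ¬((x = y ∧ x ∈ U ∧ H.Adj w z) ∧ (w = z ∧ K.Adj x y)) :=
      fun ⟨⟨hxy, _⟩, _, hK⟩ => K.loopless.irrefl x (hxy ▸ hK)
    by_cases hP : x = y ∧ x ∈ U ∧ H.Adj w z <;> by_cases hQ : w = z ∧ K.Adj x y <;>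
      simp only [hierProd, hP, hQ] <;> simp_all
  rw [degree_eq_sum_ite, Fintype.sum_prod_type]
  simp only [hsplit, sum_add_distrib, ite_and, sum_ite_irrel, sum_const_zero, sum_ite_eq,
    mem_univ, if_true, ← degree_eq_sum_ite]

theorem Rgraph_degree_inl (G : SimpleGraph α) (u : α) :
    (Rgraph G).degree (Sum.inl u) = 2 * G.degree u := by
  have hedges : (∑ e : G.edgeSet, if u ∈ (e : Sym2 α) then 1 else 0) = G.degree u := by
    rw [← card_incidenceFinset_eq_degree, incidenceFinset_eq_filter, card_filter,
      sum_subtype G.edgeFinset (fun e => mem_edgeFinset) (fun e => if u ∈ e then 1 else 0)]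
  rw [degree_eq_sum_ite, Fintype.sum_sum_type, two_mul]
  congr 1
  · rw [degree_eq_sum_ite]
    simp [Rgraph, Sgraph, Ograph]
  · rw [← hedges]
    simp [Rgraph, Sgraph, Ograph]

theorem Rgraph_degree_inr (G : SimpleGraph α) (e : G.edgeSet) :
    (Rgraph G).degree (Sum.inr e) = 2 := by
  have hends : (∑ v : α, if v ∈ (e : Sym2 α) then 1 else 0) = 2 := by
    rw [← card_filter, ← Sym2.card_toFinset_of_not_isDiag _ (G.not_isDiag_of_mem_edgeSet e.2)]
    congr 1
    ext; simp
  rw [degree_eq_sum_ite, Fintype.sum_sum_type]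
  simp [Rgraph, Sgraph, Ograph, hends]

theorem Findex_FSum_Rgraph (G : SimpleGraph α) (H : SimpleGraph β) :
    Findex (FSum (Rgraph G) H) =
      ∑ u, ∑ w, (H.degree w + 2 * G.degree u) ^ 3 + 8 * #G.edgeFinset * Fintype.card β := by
  -- `rw [hierProd_degree]` fails here: the `Fintype` instances on neighbour sets inside `Findex`
  -- mention `FSum`, so the lemma is restated up to defeq.
  have hdeg (x : α ⊕ G.edgeSet) (w : β) : (FSum (Rgraph G) H).degree (x, w) =
      (if x ∈ Set.range Sum.inl then H.degree w else 0) + (Rgraph G).degree x :=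
    hierProd_degree _ _ _ x w
  rw [Findex, Fintype.sum_prod_type, Fintype.sum_sum_type]
  congr 1
  · simp [hdeg, Rgraph_degree_inl]
  · simp only [hdeg, Rgraph_degree_inr, Set.mem_range, reduceCtorEq, exists_false, if_false,
      zero_add, sum_const, card_univ, smul_eq_mul, edgeFinset_card]
    ring

end SimpleGraph

theorem Findex_Rsum_general {α β : Type*} [Fintype α] [Fintype β]
    (G : SimpleGraph α) (H : SimpleGraph β) :
    Findex (FSum (Rgraph G) H) =
      8 * Fintype.card β * Findex G + Fintype.card α * Findex H
        + 24 * H.edgeFinset.card * M1 G + 12 * G.edgeFinset.card * M1 H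
        + 8 * Fintype.card β * G.edgeFinset.card := by
  rw [Findex_FSum_Rgraph, sum_sum_add_pow_three]
  simp only [mul_pow, ← mul_sum, sum_degrees_eq_twice_card_edges, Nat.cast_id]
  rw [Findex, Findex, M1, M1]
  ring

theorem Findex_Rsum {α β : Type*} [Fintype α] [Fintype β]
    (G : SimpleGraph α) (H : SimpleGraph β)
    (hcard : 2 ≤ Fintype.card α) (hG : G.Connected) (hH : H.Connected) :
    Findex (FSum (Rgraph G) H) =
      8 * Fintype.card β * Findex G + Fintype.card α * Findex H
        + 24 * H.edgeFinset.card * M1 G + 12 * G.edgeFinset.card * M1 H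
        + 8 * Fintype.card β * G.edgeFinset.card :=
  Findex_Rsum_general G H
end

section
/- The linear hexagonal chain L_n, which is isomorphic to P_{n+1} +_S P₂ (n≥2), has F-index equal to 70n − 22. -/
open SimpleGraph Finset
open scoped Classical

/-! In `G +_S H` a vertex `(u, v)` with `u ∈ V(G)` has degree `d_G(u) + d_H(v)`, and a vertex
`(e, v)` with `e ∈ E(G)` has degree 2 (its two ends in `S(G)`). Expanding the cube and using the
handshake lemma gives
`F(G +_S H) = |V(H)| F(G) + 6 |E(H)| M₁(G) + 6 |E(G)| M₁(H) + |V(G)| F(H) + 8 |E(G)| |V(H)|`.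
A path on `n + 1 ≥ 2` vertices has two vertices of degree 1 and `n - 1` of degree 2, so
`F(P_{n+1}) = 8n - 6`, `M₁(P_{n+1}) = 4n - 2` and `|E(P_{n+1})| = n`, and the formula yields
`70n - 22`. -/

lemma degree_hierProd {α β : Type*} [Fintype α] [Fintype β] (G : SimpleGraph α)
    (H : SimpleGraph β) (U : Set α) (x : α) (v : β) :
    (hierProd G H U).degree (x, v) = G.degree x + if x ∈ U then H.degree v else 0 := by
  have hnbr : (hierProd G H U).neighborFinset (x, v) =
      (G.neighborFinset x).map (.sectL α v) ∪
        if x ∈ U then (H.neighborFinset v).map (.sectR x β) else ∅ := by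
    ext ⟨y, w⟩
    rw [mem_neighborFinset]
    split_ifs <;> simp [hierProd, *, eq_comm, and_comm, or_comm]
  have hdisj : Disjoint ((G.neighborFinset x).map (.sectL α v))
      (if x ∈ U then (H.neighborFinset v).map (.sectR x β) else ∅) := by
    split_ifs
    · simp only [Finset.disjoint_left, mem_map, mem_neighborFinset]
      rintro _ ⟨y, hy, rfl⟩ ⟨w, -, hyw⟩
      simp only [Function.Embedding.sectL_apply, Function.Embedding.sectR_apply,
        Prod.mk.injEq] at hyw
      exact G.ne_of_adj hy hyw.1
    · exact Finset.disjoint_empty_right _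
  rw [← card_neighborFinset_eq_degree, hnbr, card_union_of_disjoint hdisj, card_map,
    apply_ite Finset.card, card_map, card_empty, card_neighborFinset_eq_degree,
    card_neighborFinset_eq_degree]

section Subdivision

variable {α : Type*} [Fintype α] (G : SimpleGraph α)

lemma degree_Sgraph_inl (a : α) : (Sgraph G).degree (.inl a) = G.degree a := by
  have hnbr : (Sgraph G).neighborFinset (.inl a) =
      ((G.incidenceFinset a).subtype (· ∈ G.edgeSet)).map .inr := by
    ext x
    rw [mem_neighborFinset]
    cases x <;> simp [Sgraph, incidenceSet]
  rw [← card_neighborFinset_eq_degree, hnbr, card_map, card_subtype,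
    filter_true_of_mem fun e he => G.incidenceSet_subset a (G.mem_incidenceFinset a e |>.1 he),
    card_incidenceFinset_eq_degree]

lemma degree_Sgraph_inr (e : G.edgeSet) : (Sgraph G).degree (.inr e) = 2 := by
  have hnbr : (Sgraph G).neighborFinset (.inr e) = (e : Sym2 α).toFinset.map .inl := by
    ext x
    rw [mem_neighborFinset]
    cases x <;> simp [Sgraph]
  rw [← card_neighborFinset_eq_degree, hnbr, card_map,
    Sym2.card_toFinset_of_not_isDiag _ (G.not_isDiag_of_mem_edgeSet e.2)]

end Subdivision

lemma sum_sum_add_pow_three_s17 {ι κ R : Type*} [CommSemiring R] (s : Finset ι) (t : Finset κ)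
    (x : ι → R) (y : κ → R) :
    ∑ i ∈ s, ∑ j ∈ t, (x i + y j) ^ 3 =
      #t * ∑ i ∈ s, x i ^ 3 + 3 * (∑ i ∈ s, x i ^ 2) * ∑ j ∈ t, y j +
        3 * (∑ i ∈ s, x i) * ∑ j ∈ t, y j ^ 2 + #s * ∑ j ∈ t, y j ^ 3 := by
  have hcube (a b : R) : (a + b) ^ 3 = a ^ 3 + 3 * a ^ 2 * b + 3 * a * b ^ 2 + b ^ 3 := by ring
  simp only [hcube, sum_add_distrib, ← mul_sum, ← sum_mul, sum_const, nsmul_eq_mul, mul_assoc]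

section FSum

variable {α β : Type*} [Fintype α] [Fintype β]

lemma degree_FSum_inl {G : SimpleGraph α} (K : SimpleGraph (α ⊕ G.edgeSet)) (H : SimpleGraph β)
    (a : α) (v : β) : (FSum K H).degree (.inl a, v) = K.degree (.inl a) + H.degree v := by
  rw [FSum, degree_hierProd, if_pos (Set.mem_range_self a)]

lemma degree_FSum_inr {G : SimpleGraph α} (K : SimpleGraph (α ⊕ G.edgeSet)) (H : SimpleGraph β)
    (e : G.edgeSet) (v : β) : (FSum K H).degree (.inr e, v) = K.degree (.inr e) := by
  rw [FSum, degree_hierProd, if_neg (by simp), add_zero]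

theorem Findex_FSum_Sgraph (G : SimpleGraph α) (H : SimpleGraph β) :
    Findex (FSum (Sgraph G) H) =
      Fintype.card β * Findex G + 6 * #H.edgeFinset * M1 G + 6 * #G.edgeFinset * M1 H +
        Fintype.card α * Findex H + 8 * #G.edgeFinset * Fintype.card β := by
  rw [Findex, Fintype.sum_prod_type, Fintype.sum_sum_type]
  simp only [degree_FSum_inl, degree_FSum_inr, degree_Sgraph_inl, degree_Sgraph_inr,
    sum_sum_add_pow_three_s17, sum_degrees_eq_twice_card_edges, sum_const, card_univ, smul_eq_mul,
    edgeFinset_card, Nat.cast_id, Findex, M1]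
  ring

end FSum

section Path

variable (n : ℕ)

lemma pathGraph_neighborFinset_zero : (pathGraph (n + 2)).neighborFinset 0 = {1} := by
  ext b
  simp only [mem_neighborFinset, mem_singleton, pathGraph_adj, Fin.ext_iff, Fin.val_zero,
    Fin.val_one]
  omega

lemma pathGraph_neighborFinset_last :
    (pathGraph (n + 2)).neighborFinset (Fin.last (n + 1)) = {(Fin.last n).castSucc} := by
  ext b
  simp only [mem_neighborFinset, mem_singleton, pathGraph_adj, Fin.ext_iff, Fin.val_last,
    Fin.val_castSucc]
  omega

lemma pathGraph_neighborFinset_succ_castSucc (i : Fin n) :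
    (pathGraph (n + 2)).neighborFinset i.castSucc.succ = {i.castSucc.castSucc, i.succ.succ} := by
  ext b
  simp only [mem_neighborFinset, mem_insert, mem_singleton, pathGraph_adj, Fin.ext_iff,
    Fin.val_castSucc, Fin.val_succ]
  omega

lemma sum_degree_pathGraph (f : ℕ → ℕ) :
    ∑ a, f ((pathGraph (n + 2)).degree a) = 2 * f 1 + n * f 2 := by
  have hinterior (i : Fin n) : (pathGraph (n + 2)).degree i.castSucc.succ = 2 := by
    rw [← card_neighborFinset_eq_degree, pathGraph_neighborFinset_succ_castSucc,
      card_pair (by simp only [ne_eq, Fin.ext_iff, Fin.val_castSucc, Fin.val_succ]; omega)]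
  rw [Fin.sum_univ_succ, Fin.sum_univ_castSucc, Fin.succ_last, ← card_neighborFinset_eq_degree,
    ← card_neighborFinset_eq_degree, pathGraph_neighborFinset_zero, pathGraph_neighborFinset_last]
  simp only [card_singleton, hinterior, sum_const, card_univ, Fintype.card_fin, smul_eq_mul]
  ring

lemma Findex_pathGraph : Findex (pathGraph (n + 2)) = 8 * n + 2 := by
  rw [Findex, sum_degree_pathGraph (f := (· ^ 3))]
  ring

lemma M1_pathGraph : M1 (pathGraph (n + 2)) = 4 * n + 2 := by
  rw [M1, sum_degree_pathGraph (f := (· ^ 2))]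
  ring

/- Stated for every `Fintype` instance on the edge set: the one inside `FSum (Sgraph _)` is the
classical one, not the one coming from the decidable adjacency of `pathGraph`. -/
lemma card_edgeFinset_pathGraph [Fintype (pathGraph (n + 2)).edgeSet] :
    #(pathGraph (n + 2)).edgeFinset = n + 1 := by
  obtain rfl : ‹Fintype _› = (pathGraph (n + 2)).fintypeEdgeSet := Subsingleton.elim _ _
  have handshake := (pathGraph (n + 2)).sum_degrees_eq_twice_card_edges
  have hsum := sum_degree_pathGraph n id
  simp only [id] at hsum
  omega

end Path

theorem Findex_linear_hexagonal_chain (n : ℕ) (hn : 2 ≤ n) :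
    (Findex (FSum (Sgraph (pathGraph (n + 1))) (pathGraph 2)) : ℤ) =
      70 * n - 22 := by
  obtain ⟨m, rfl⟩ : ∃ m, n = m + 1 := ⟨n - 1, by omega⟩
  rw [Findex_FSum_Sgraph, Findex_pathGraph m, M1_pathGraph m, card_edgeFinset_pathGraph m,
    Findex_pathGraph 0, M1_pathGraph 0, card_edgeFinset_pathGraph 0, Fintype.card_fin,
    Fintype.card_fin]
  push_cast
  ring
end
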